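/- arXiv:1711.02362 — 2 statements merged into one kernel-verified Lean document; each statement's English description precedes it below -/
import Mathlib

section
/- The generalized Laguerre polynomials with parameter 1/2 satisfy the orthogonality relation: for all nonnegative integers n, m, the integral over (0,∞) of ζ^{1/2} e^{-ζ} L_n^{(1/2)}(ζ) L_m^{(1/2)}(ζ) dζ equals Γ(n+3/2)/n! if n = m and 0 otherwise. -/
/-!
Expanding `L_m` in monomials reduces the integral, for `m ≤ n`, to the moments
`∫ x^{1/2} e^{-x} L_n(x) x^l` with `l ≤ m`. Integrating termwise, each moment is
`Γ(n+3/2)/n!` times `∑ₖ (-1)^k C(n,k) (k+3/2)_l`, which is `(-1)^n` times the `n`-th forward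
difference of the Pochhammer polynomial `(X)_l` at `3/2`. This vanishes for `l < n`, and for
`l = n` it is `n!` since `(X)_n` is monic of degree `n`.
-/

open scoped Nat

/-- The generalized Laguerre polynomial `L_n^{(1/2)}` of degree `n` with parameter `1/2`. -/
noncomputable def laguerreHalf (n : ℕ) (x : ℝ) : ℝ :=
  ∑ k ∈ Finset.range (n + 1),
    (-1 : ℝ) ^ k *
      (Real.Gamma (n + 3 / 2) / (Real.Gamma (k + 3 / 2) * (n - k)! * k !)) * x ^ k

open Finset Polynomial MeasureTheory Set

section AlternatingSum

variable {R : Type*} [CommRing R]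

theorem sum_range_neg_one_pow_mul_choose_mul_eval (P : R[X]) (n : ℕ) (a : R) :
    ∑ k ∈ range (n + 1), (-1) ^ k * n.choose k * P.eval (a + k) =
      (-1) ^ n * (fwdDiff 1)^[n] P.eval a := by
  rw [fwdDiff_iter_eq_sum_shift, mul_sum]
  refine sum_congr rfl fun k hk => ?_
  have hsign : (-1 : R) ^ n * (-1) ^ (n - k) = (-1) ^ k := by
    have hkn := mem_range_succ_iff.mp hk
    rw [← pow_add, show n + (n - k) = 2 * (n - k) + k by omega, pow_add, pow_mul]
    simp
  simp [zsmul_eq_mul, ← hsign, mul_assoc]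

theorem sum_range_neg_one_pow_mul_choose_mul_eval_eq_zero {P : R[X]} {n : ℕ}
    (hP : P.natDegree < n) (a : R) :
    ∑ k ∈ range (n + 1), (-1) ^ k * n.choose k * P.eval (a + k) = 0 := by
  rw [sum_range_neg_one_pow_mul_choose_mul_eval, fwdDiff_iter_eq_zero_of_degree_lt hP,
    Pi.zero_apply, mul_zero]

theorem Polynomial.Monic.sum_range_neg_one_pow_mul_choose_mul_eval {P : R[X]} (hP : P.Monic)
    (a : R) :
    ∑ k ∈ range (P.natDegree + 1), (-1) ^ k * P.natDegree.choose k * P.eval (a + k) =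
      (-1) ^ P.natDegree * P.natDegree ! := by
  rw [_root_.sum_range_neg_one_pow_mul_choose_mul_eval, fwdDiff_iter_degree_eq_factorial,
    hP.leadingCoeff, one_smul]
  rfl

end AlternatingSum

theorem Real.Gamma_add_nat_eq_mul_ascPochhammer {x : ℝ} (hx : ∀ m : ℕ, x ≠ -m) (l : ℕ) :
    Real.Gamma (x + l) = Real.Gamma x * (ascPochhammer ℝ l).eval x := by
  induction l with
  | zero => simp
  | succ l ih =>
    have hxl : x + l ≠ 0 := fun h => hx l (eq_neg_of_add_eq_zero_left h)
    rw [Nat.cast_succ, ← add_assoc, Real.Gamma_add_one hxl, ih, ascPochhammer_succ_eval]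
    ring

-- The right-hand side is the integrand of `Real.Gamma_eq_integral` at `s = a + j + 1`.
theorem rpow_mul_exp_neg_mul_pow_eq {x : ℝ} (hx : 0 < x) (a : ℝ) (j : ℕ) :
    x ^ a * Real.exp (-x) * x ^ j = Real.exp (-x) * x ^ (a + j + 1 - 1) := by
  rw [add_sub_cancel_right, Real.rpow_add hx, Real.rpow_natCast]
  ring

theorem integrableOn_rpow_mul_exp_neg_mul_pow {a : ℝ} (ha : -1 < a) (j : ℕ) :
    IntegrableOn (fun x => x ^ a * Real.exp (-x) * x ^ j) (Ioi 0) :=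
  (Real.GammaIntegral_convergent (by linarith [j.cast_nonneg (α := ℝ)])).congr_fun
    (fun _ hx => (rpow_mul_exp_neg_mul_pow_eq hx a j).symm) measurableSet_Ioi

theorem integral_rpow_mul_exp_neg_mul_pow {a : ℝ} (ha : -1 < a) (j : ℕ) :
    ∫ x in Ioi 0, x ^ a * Real.exp (-x) * x ^ j = Real.Gamma (a + j + 1) := by
  rw [Real.Gamma_eq_integral (by linarith [j.cast_nonneg (α := ℝ)])]
  exact setIntegral_congr_fun measurableSet_Ioi fun _ hx => rpow_mul_exp_neg_mul_pow_eq hx a j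

noncomputable def laguerreHalfCoeff (n k : ℕ) : ℝ :=
  (-1 : ℝ) ^ k * (Real.Gamma (n + 3 / 2) / (Real.Gamma (k + 3 / 2) * (n - k)! * k !))

theorem laguerreHalf_eq_sum (n : ℕ) (x : ℝ) :
    laguerreHalf n x = ∑ k ∈ range (n + 1), laguerreHalfCoeff n k * x ^ k :=
  rfl

theorem laguerreHalfCoeff_self (n : ℕ) : laguerreHalfCoeff n n = (-1) ^ n / n ! := by
  have hΓ : Real.Gamma (n + 3 / 2) ≠ 0 := (Real.Gamma_pos_of_pos (by positivity)).ne'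
  rw [laguerreHalfCoeff, Nat.sub_self, Nat.factorial_zero, Nat.cast_one, mul_one]
  field_simp

theorem laguerreHalfCoeff_mul_Gamma {n k : ℕ} (hk : k ≤ n) (l : ℕ) :
    laguerreHalfCoeff n k * Real.Gamma (3 / 2 + k + l) =
      Real.Gamma (n + 3 / 2) / n ! *
        ((-1) ^ k * n.choose k * (ascPochhammer ℝ l).eval (3 / 2 + k : ℝ)) := by
  rw [Real.Gamma_add_nat_eq_mul_ascPochhammer (fun m => by linarith [m.cast_nonneg (α := ℝ)]),
    ← Nat.choose_mul_factorial_mul_factorial hk, laguerreHalfCoeff, add_comm (3 / 2 : ℝ)]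
  have hΓ : Real.Gamma (k + 3 / 2) ≠ 0 := (Real.Gamma_pos_of_pos (by positivity)).ne'
  have hchoose : (n.choose k : ℝ) ≠ 0 := Nat.cast_ne_zero.mpr (Nat.choose_pos hk).ne'
  push_cast
  field_simp

theorem laguerreHalf_mul_pow_eq_sum (n l : ℕ) (x : ℝ) :
    x ^ ((1 : ℝ) / 2) * Real.exp (-x) * laguerreHalf n x * x ^ l =
      ∑ k ∈ range (n + 1),
        laguerreHalfCoeff n k * (x ^ ((1 : ℝ) / 2) * Real.exp (-x) * x ^ (k + l)) := by
  rw [laguerreHalf_eq_sum, mul_sum, sum_mul]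
  refine sum_congr rfl fun k _ => ?_
  ring

theorem integrableOn_laguerreHalf_mul_pow (n l : ℕ) :
    IntegrableOn (fun x => x ^ ((1 : ℝ) / 2) * Real.exp (-x) * laguerreHalf n x * x ^ l)
      (Ioi 0) := by
  simp_rw [laguerreHalf_mul_pow_eq_sum]
  exact integrable_finsetSum _ fun k _ =>
    (integrableOn_rpow_mul_exp_neg_mul_pow (by norm_num) _).const_mul _

theorem integral_laguerreHalf_mul_pow (n l : ℕ) :
    ∫ x in Ioi 0, x ^ ((1 : ℝ) / 2) * Real.exp (-x) * laguerreHalf n x * x ^ l =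
      Real.Gamma (n + 3 / 2) / n ! *
        ∑ k ∈ range (n + 1),
          (-1) ^ k * n.choose k * (ascPochhammer ℝ l).eval (3 / 2 + k : ℝ) := by
  simp_rw [laguerreHalf_mul_pow_eq_sum]
  rw [integral_finsetSum _ fun k _ =>
    (integrableOn_rpow_mul_exp_neg_mul_pow (by norm_num) _).const_mul _, mul_sum]
  refine sum_congr rfl fun k hk => ?_
  rw [integral_const_mul, integral_rpow_mul_exp_neg_mul_pow (by norm_num),
    ← laguerreHalfCoeff_mul_Gamma (mem_range_succ_iff.mp hk)]
  congr 2
  push_cast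
  ring

theorem integral_laguerreHalf_mul_pow_of_lt {n l : ℕ} (h : l < n) :
    ∫ x in Ioi 0, x ^ ((1 : ℝ) / 2) * Real.exp (-x) * laguerreHalf n x * x ^ l = 0 := by
  rw [integral_laguerreHalf_mul_pow, sum_range_neg_one_pow_mul_choose_mul_eval_eq_zero
    (by rwa [ascPochhammer_natDegree]), mul_zero]

theorem integral_laguerreHalf_mul_pow_self (n : ℕ) :
    ∫ x in Ioi 0, x ^ ((1 : ℝ) / 2) * Real.exp (-x) * laguerreHalf n x * x ^ n =
      (-1) ^ n * Real.Gamma (n + 3 / 2) := by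
  have h := (monic_ascPochhammer ℝ n).sum_range_neg_one_pow_mul_choose_mul_eval (3 / 2)
  rw [ascPochhammer_natDegree] at h
  rw [integral_laguerreHalf_mul_pow, h]
  field_simp

theorem integral_laguerreHalf_mul_laguerreHalf_of_le {m n : ℕ} (hmn : m ≤ n) :
    ∫ x in Ioi 0, x ^ ((1 : ℝ) / 2) * Real.exp (-x) * laguerreHalf n x * laguerreHalf m x =
      if n = m then Real.Gamma (n + 3 / 2) / n ! else 0 := by
  have hexpand : ∀ x : ℝ,
      x ^ ((1 : ℝ) / 2) * Real.exp (-x) * laguerreHalf n x * laguerreHalf m x =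
        ∑ l ∈ range (m + 1), laguerreHalfCoeff m l *
          (x ^ ((1 : ℝ) / 2) * Real.exp (-x) * laguerreHalf n x * x ^ l) := fun x => by
    rw [laguerreHalf_eq_sum m, mul_sum]
    exact sum_congr rfl fun l _ => by ring
  simp_rw [hexpand]
  rw [integral_finsetSum _ fun l _ => (integrableOn_laguerreHalf_mul_pow n l).const_mul _]
  simp_rw [integral_const_mul]
  split_ifs with hnm
  · subst hnm
    rw [sum_range_succ, sum_eq_zero fun l hl => by
      rw [integral_laguerreHalf_mul_pow_of_lt (mem_range.mp hl), mul_zero],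
      zero_add, integral_laguerreHalf_mul_pow_self, laguerreHalfCoeff_self]
    field_simp
    rw [← pow_mul, pow_mul', neg_one_sq, one_pow]
  · exact sum_eq_zero fun l hl => by
      rw [integral_laguerreHalf_mul_pow_of_lt (by have := mem_range.mp hl; omega), mul_zero]

/-- Orthogonality of the generalized Laguerre polynomials with parameter `1/2`. -/
theorem laguerreHalf_orthogonality (n m : ℕ) :
    ∫ ζ in Set.Ioi (0 : ℝ),
        ζ ^ ((1 : ℝ) / 2) * Real.exp (-ζ) * laguerreHalf n ζ * laguerreHalf m ζ
      = if n = m then Real.Gamma (n + 3 / 2) / n ! else 0 := by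
  rcases le_total m n with hmn | hnm
  · exact integral_laguerreHalf_mul_laguerreHalf_of_le hmn
  · simp_rw [mul_right_comm _ (laguerreHalf n _)]
    rw [integral_laguerreHalf_mul_laguerreHalf_of_le hnm]
    obtain rfl | hne := eq_or_ne n m
    · rfl
    · rw [if_neg hne, if_neg hne.symm]
end

section
/- Suppose the 2×2 matrix-valued spectral coefficients satisfy a(k)·conj(a(conj k)) + b(k)·conj(b(conj k)) = 1 together with the symmetries conj(a(−conj k)) = a(k), conj(b(−conj k)) = b(k), and the boundary relation a_−(k) = −i·conj(b_+(conj k)) on the segment (ic, −ic) of the imaginary axis (c > 0). Then the boundary values a_±(k) and b_±(k) are nonvanishing for every k in the open segment (−ic, ic). -/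
open Complex Filter

/-- The open segment `(-ic, ic)` of the imaginary axis. -/
def imSegment (c : ℝ) : Set ℂ := {k : ℂ | k.re = 0 ∧ |k.im| < c}

/-!
On the imaginary axis `conj k = -k`, so passing to the limit from the right half-plane turns the
symmetry into `a₊ = conj a₋` and the unitarity relation into
`a₊(k)·conj a₊(-k) + b₊(k)·conj b₊(-k) = 1`. Combined with the boundary relation this gives
`a₊(k) = i·b₊(-k)`, and unitarity becomes `2 Re (b₊(k)·conj b₊(-k)) = 1`. Hence `b₊(±k) ≠ 0`,
and the other three boundary values are `b₊` up to the factor `±i` and conjugation.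
-/

open ComplexConjugate Topology

lemma conj_eq_neg_of_re_eq_zero {k : ℂ} (hk : k.re = 0) : conj k = -k := by
  apply Complex.ext <;> simp [hk]

lemma neg_mem_imSegment {c : ℝ} {k : ℂ} (hk : k ∈ imSegment c) : -k ∈ imSegment c :=
  ⟨by simp [hk.1], by simpa using hk.2⟩

lemma nhdsWithin_re_pos_neBot {k : ℂ} (hk : k.re = 0) : (𝓝[{z : ℂ | 0 < z.re}] k).NeBot :=
  mem_closure_iff_nhdsWithin_neBot.mp (by rw [closure_setOfPred_lt_re]; exact hk.ge)

lemma tendsto_conj_nhdsWithin_re_pos (k : ℂ) :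
    Tendsto conj (𝓝[{z : ℂ | 0 < z.re}] k) (𝓝[{z : ℂ | 0 < z.re}] (conj k)) :=
  continuous_conj.continuousWithinAt.tendsto_nhdsWithin fun z hz => by simpa using hz

lemma tendsto_neg_conj_nhdsWithin_re_pos (k : ℂ) :
    Tendsto (fun z => -conj z) (𝓝[{z : ℂ | 0 < z.re}] k) (𝓝[{z : ℂ | z.re < 0}] (-conj k)) :=
  continuous_conj.neg.continuousWithinAt.tendsto_nhdsWithin fun z hz => by simpa using hz

lemma boundary_value_eq_conj_of_reflection {f : ℂ → ℂ} {k p m : ℂ} (hk : k.re = 0)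
    (hsym : ∀ z : ℂ, 0 < z.re → conj (f (-conj z)) = f z)
    (hp : Tendsto f (𝓝[{z : ℂ | 0 < z.re}] k) (𝓝 p))
    (hm : Tendsto f (𝓝[{z : ℂ | z.re < 0}] k) (𝓝 m)) :
    p = conj m := by
  have := nhdsWithin_re_pos_neBot hk
  have hreflect := tendsto_neg_conj_nhdsWithin_re_pos k
  rw [conj_eq_neg_of_re_eq_zero hk, neg_neg] at hreflect
  exact tendsto_nhds_unique_of_eventuallyEq hp
    ((continuous_conj.tendsto m).comp (hm.comp hreflect))
    (eventually_nhdsWithin_of_forall fun z hz => (hsym z hz).symm)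

lemma boundary_mul_conj_add_mul_conj_eq_one {a b : ℂ → ℂ} {k α α' β β' : ℂ} (hk : k.re = 0)
    (huni : ∀ z : ℂ, 0 < z.re → a z * conj (a (conj z)) + b z * conj (b (conj z)) = 1)
    (ha : Tendsto a (𝓝[{z : ℂ | 0 < z.re}] k) (𝓝 α))
    (ha' : Tendsto a (𝓝[{z : ℂ | 0 < z.re}] (-k)) (𝓝 α'))
    (hb : Tendsto b (𝓝[{z : ℂ | 0 < z.re}] k) (𝓝 β))
    (hb' : Tendsto b (𝓝[{z : ℂ | 0 < z.re}] (-k)) (𝓝 β')) :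
    α * conj α' + β * conj β' = 1 := by
  have := nhdsWithin_re_pos_neBot hk
  have hconj := tendsto_conj_nhdsWithin_re_pos k
  rw [conj_eq_neg_of_re_eq_zero hk] at hconj
  have hlim := (ha.mul ((continuous_conj.tendsto α').comp (ha'.comp hconj))).add
    (hb.mul ((continuous_conj.tendsto β').comp (hb'.comp hconj)))
  exact tendsto_nhds_unique_of_eventuallyEq hlim tendsto_const_nhds
    (eventually_nhdsWithin_of_forall huni)

theorem spectral_coefficients_nonvanishing_general (c : ℝ)
    (a b aP aM bP bM : ℂ → ℂ)
    (huni : ∀ k : ℂ, k.re ≠ 0 →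
      a k * (starRingEnd ℂ) (a ((starRingEnd ℂ) k))
        + b k * (starRingEnd ℂ) (b ((starRingEnd ℂ) k)) = 1)
    (hsyma : ∀ k : ℂ, k.re ≠ 0 → (starRingEnd ℂ) (a (-(starRingEnd ℂ) k)) = a k)
    (hsymb : ∀ k : ℂ, k.re ≠ 0 → (starRingEnd ℂ) (b (-(starRingEnd ℂ) k)) = b k)
    (haP : ∀ k ∈ imSegment c,
      Tendsto a (nhdsWithin k {z : ℂ | 0 < z.re}) (nhds (aP k)))
    (haM : ∀ k ∈ imSegment c,
      Tendsto a (nhdsWithin k {z : ℂ | z.re < 0}) (nhds (aM k)))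
    (hbP : ∀ k ∈ imSegment c,
      Tendsto b (nhdsWithin k {z : ℂ | 0 < z.re}) (nhds (bP k)))
    (hbM : ∀ k ∈ imSegment c,
      Tendsto b (nhdsWithin k {z : ℂ | z.re < 0}) (nhds (bM k)))
    (hrel : ∀ k ∈ imSegment c,
      aM k = -Complex.I * (starRingEnd ℂ) (bP ((starRingEnd ℂ) k))) :
    ∀ k ∈ imSegment c, aP k ≠ 0 ∧ aM k ≠ 0 ∧ bP k ≠ 0 ∧ bM k ≠ 0 := by
  have haP_eq_conj : ∀ k ∈ imSegment c, aP k = conj (aM k) := fun k hk =>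
    boundary_value_eq_conj_of_reflection hk.1 (fun z hz => hsyma z hz.ne') (haP k hk) (haM k hk)
  have hbP_eq_conj : ∀ k ∈ imSegment c, bP k = conj (bM k) := fun k hk =>
    boundary_value_eq_conj_of_reflection hk.1 (fun z hz => hsymb z hz.ne') (hbP k hk) (hbM k hk)
  have haP_eq : ∀ k ∈ imSegment c, aP k = I * bP (-k) := fun k hk => by
    rw [haP_eq_conj k hk, hrel k hk, conj_eq_neg_of_re_eq_zero hk.1]
    simp
  intro k hk
  have hk' := neg_mem_imSegment hk
  have hunit := boundary_mul_conj_add_mul_conj_eq_one hk.1 (fun z hz => huni z hz.ne')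
    (haP k hk) (haP (-k) hk') (hbP k hk) (hbP (-k) hk')
  rw [haP_eq k hk, haP_eq (-k) hk', neg_neg] at hunit
  have hbP_ne : bP k ≠ 0 := by rintro h; simp [h] at hunit
  have hbP_neg_ne : bP (-k) ≠ 0 := by rintro h; simp [h] at hunit
  have haP_ne : aP k ≠ 0 := haP_eq k hk ▸ mul_ne_zero I_ne_zero hbP_neg_ne
  exact ⟨haP_ne, by simpa [haP_eq_conj k hk] using haP_ne, hbP_ne,
    by simpa [hbP_eq_conj k hk] using hbP_ne⟩

/-- If the spectral coefficients `a`, `b` (analytic off the segment `[-ic, ic]`) satisfy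
`a(k)·conj(a(conj k)) + b(k)·conj(b(conj k)) = 1`, the symmetries `conj(a(-conj k)) = a(k)`,
`conj(b(-conj k)) = b(k)`, and the boundary relation `a₋(k) = -i·conj(b₊(conj k))` on the
segment, then the boundary values `a±(k)`, `b±(k)` are nonvanishing on `(-ic, ic)`. -/
theorem spectral_coefficients_nonvanishing (c : ℝ) (hc : 0 < c)
    (a b aP aM bP bM : ℂ → ℂ)
    (huni : ∀ k : ℂ, k.re ≠ 0 →
      a k * (starRingEnd ℂ) (a ((starRingEnd ℂ) k))
        + b k * (starRingEnd ℂ) (b ((starRingEnd ℂ) k)) = 1)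
    (hsyma : ∀ k : ℂ, k.re ≠ 0 → (starRingEnd ℂ) (a (-(starRingEnd ℂ) k)) = a k)
    (hsymb : ∀ k : ℂ, k.re ≠ 0 → (starRingEnd ℂ) (b (-(starRingEnd ℂ) k)) = b k)
    (haP : ∀ k ∈ imSegment c,
      Tendsto a (nhdsWithin k {z : ℂ | 0 < z.re}) (nhds (aP k)))
    (haM : ∀ k ∈ imSegment c,
      Tendsto a (nhdsWithin k {z : ℂ | z.re < 0}) (nhds (aM k)))
    (hbP : ∀ k ∈ imSegment c,
      Tendsto b (nhdsWithin k {z : ℂ | 0 < z.re}) (nhds (bP k)))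
    (hbM : ∀ k ∈ imSegment c,
      Tendsto b (nhdsWithin k {z : ℂ | z.re < 0}) (nhds (bM k)))
    (hrel : ∀ k ∈ imSegment c,
      aM k = -Complex.I * (starRingEnd ℂ) (bP ((starRingEnd ℂ) k))) :
    ∀ k ∈ imSegment c, aP k ≠ 0 ∧ aM k ≠ 0 ∧ bP k ≠ 0 ∧ bM k ≠ 0 :=
  spectral_coefficients_nonvanishing_general c a b aP aM bP bM huni hsyma hsymb haP haM hbP hbM hrel
end
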